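/- arXiv:2010.00355 — 4 statements merged into one kernel-verified Lean document; each statement's English description precedes it below -/
import Mathlib

section
/- Let 0 < β < 1, τ a nonnegative integer, and δ ∈ (0,1). Let Y(k) ∈ ℝ^{r×d} be a sequence with Y(k) = Y(0) for all k ∈ [-τ, 0], satisfying ‖Y(k+1)‖ ≤ (1-β)‖Y(k)‖ + δβ‖Y(k-τ)‖ for all k ≥ 0. Suppose that β < 1 - δ^{1/τ} if τ ≥ 1, while β ∈ (0,1) is arbitrary if τ = 0. Then η := 1 - β + δβ/(1-β)^τ < 1, and ‖Y(k)‖ ≤ 2 η^k ‖Y(0)‖ for all k ≥ 0. -/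
open Matrix

attribute [local instance] Matrix.frobeniusNormedAddCommGroup

/-- the delayed recursion bound implies `‖Y(k)‖ ≤ 2 η^k ‖Y(0)‖`,
where `η = 1 - β + δβ/(1-β)^τ < 1` under the step-size condition. -/
theorem stmt_4 (r d : ℕ) (β δ : ℝ) (τ : ℕ)
    (hβ : β ∈ Set.Ioo (0 : ℝ) 1) (hδ : δ ∈ Set.Ioo (0 : ℝ) 1)
    (Y : ℤ → Matrix (Fin r) (Fin d) ℝ)
    (hinit : ∀ k : ℤ, -(τ : ℤ) ≤ k → k ≤ 0 → Y k = Y 0)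
    (hrec : ∀ k : ℤ, 0 ≤ k → ‖Y (k + 1)‖ ≤ (1 - β) * ‖Y k‖ + δ * β * ‖Y (k - τ)‖)
    (hη : 1 - β + δ * β / (1 - β) ^ τ < 1) :
    ∀ k : ℤ, 0 ≤ k →
      ‖Y k‖ ≤ 2 * (1 - β + δ * β / (1 - β) ^ τ) ^ k.toNat * ‖Y 0‖ := by
  obtain ⟨hβ0, hβ1⟩ := hβ
  obtain ⟨hδ0, hδ1⟩ := hδ
  set η : ℝ := 1 - β + δ * β / (1 - β) ^ τ with hηdef
  have hb0 : (0:ℝ) < 1 - β := by linarith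
  have hbp : (0:ℝ) < (1 - β) ^ τ := by positivity
  have hc0 : 0 < δ * β / (1 - β) ^ τ := by positivity
  have hbη : 1 - β ≤ η := by rw [hηdef]; linarith
  have hη0 : 0 < η := by rw [hηdef]; linarith
  have hc : δ * β / (1 - β) ^ τ * (1 - β) ^ τ = δ * β :=
    div_mul_cancel₀ _ (ne_of_gt hbp)
  have hY0 : 0 ≤ ‖Y 0‖ := norm_nonneg _
  have key : ∀ n : ℕ, ‖Y (n : ℤ)‖ ≤ η ^ n * ‖Y 0‖ := by
    intro n
    induction n using Nat.strong_induction_on with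
    | _ n ih =>
      match n with
      | 0 => simp
      | Nat.succ m =>
        have h1 : ‖Y ((m : ℤ) + 1)‖ ≤ (1 - β) * ‖Y (m : ℤ)‖ + δ * β * ‖Y ((m : ℤ) - τ)‖ :=
          hrec m (by positivity)
        have ihm := ih m (Nat.lt_succ_self m)
        have hcast : ((Nat.succ m : ℕ) : ℤ) = (m : ℤ) + 1 := by push_cast; ring
        rw [hcast]
        have hYm : 0 ≤ ‖Y ((m : ℤ) - τ)‖ := norm_nonneg _
        rcases le_or_gt (τ : ℕ) m with hτm | hτm
        · -- delayed index is nonnegative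
          have hcast2 : ((m - τ : ℕ) : ℤ) = (m : ℤ) - τ := by
            push_cast [Nat.cast_sub hτm]; ring
          have ih2 := ih (m - τ) (by omega)
          rw [hcast2] at ih2
          have hpow : η ^ (m - τ) * η ^ τ = η ^ m := by
            rw [← pow_add]; congr 1; omega
          have hbτ : (1 - β) ^ τ ≤ η ^ τ := pow_le_pow_left₀ (le_of_lt hb0) hbη τ
          have hηm : 0 ≤ η ^ (m - τ) := by positivity
          have hstep : δ * β * (η ^ (m - τ) * ‖Y 0‖) ≤
              δ * β / (1 - β) ^ τ * (η ^ m * ‖Y 0‖) := by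
            have h2 : δ * β * η ^ (m - τ) ≤ δ * β / (1 - β) ^ τ * η ^ m := by
              calc δ * β * η ^ (m - τ)
                  = δ * β / (1 - β) ^ τ * ((1 - β) ^ τ * η ^ (m - τ)) := by
                    field_simp
                _ ≤ δ * β / (1 - β) ^ τ * (η ^ τ * η ^ (m - τ)) := by
                    apply mul_le_mul_of_nonneg_left _ (le_of_lt hc0)
                    exact mul_le_mul_of_nonneg_right hbτ hηm
                _ = δ * β / (1 - β) ^ τ * η ^ m := by rw [mul_comm (η ^ τ), hpow]
            calc δ * β * (η ^ (m - τ) * ‖Y 0‖) = δ * β * η ^ (m - τ) * ‖Y 0‖ := by ring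
              _ ≤ δ * β / (1 - β) ^ τ * η ^ m * ‖Y 0‖ :=
                  mul_le_mul_of_nonneg_right h2 hY0
              _ = δ * β / (1 - β) ^ τ * (η ^ m * ‖Y 0‖) := by ring
          have h3 : δ * β * ‖Y ((m : ℤ) - τ)‖ ≤ δ * β * (η ^ (m - τ) * ‖Y 0‖) :=
            mul_le_mul_of_nonneg_left ih2 (by positivity)
          have h4 : (1 - β) * ‖Y (m : ℤ)‖ ≤ (1 - β) * (η ^ m * ‖Y 0‖) :=
            mul_le_mul_of_nonneg_left ihm (le_of_lt hb0)
          have : η ^ (Nat.succ m) = (1 - β) * η ^ m + δ * β / (1 - β) ^ τ * η ^ m := by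
            rw [pow_succ, hηdef]; ring
          rw [this]
          nlinarith [h1, h3, h4, hstep]
        · -- delayed index is in the initial segment
          have hinit' : Y ((m : ℤ) - τ) = Y 0 := by
            apply hinit <;> omega
          rw [hinit'] at h1
          have hbτm : (1 - β) ^ τ ≤ (1 - β) ^ m :=
            pow_le_pow_of_le_one (le_of_lt hb0) (by linarith) (by omega)
          have hbm : (1 - β) ^ m ≤ η ^ m := pow_le_pow_left₀ (le_of_lt hb0) hbη m
          have h5 : (1 - β) ^ τ ≤ η ^ m := le_trans hbτm hbm
          have h2 : δ * β ≤ δ * β / (1 - β) ^ τ * η ^ m := by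
            calc δ * β = δ * β / (1 - β) ^ τ * (1 - β) ^ τ := hc.symm
              _ ≤ δ * β / (1 - β) ^ τ * η ^ m :=
                  mul_le_mul_of_nonneg_left h5 (le_of_lt hc0)
          have h4 : (1 - β) * ‖Y (m : ℤ)‖ ≤ (1 - β) * (η ^ m * ‖Y 0‖) :=
            mul_le_mul_of_nonneg_left ihm (le_of_lt hb0)
          have : η ^ (Nat.succ m) = (1 - β) * η ^ m + δ * β / (1 - β) ^ τ * η ^ m := by
            rw [pow_succ, hηdef]; ring
          rw [this]
          nlinarith [h1, h4, mul_le_mul_of_nonneg_right h2 hY0]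
  intro k hk
  have hk' : (k.toNat : ℤ) = k := Int.toNat_of_nonneg hk
  have := key k.toNat
  rw [hk'] at this
  have hpos : 0 ≤ η ^ k.toNat * ‖Y 0‖ := by positivity
  calc ‖Y k‖ ≤ η ^ k.toNat * ‖Y 0‖ := this
    _ ≤ 2 * η ^ k.toNat * ‖Y 0‖ := by nlinarith
end

section
/- Under the delayed leader dynamics X_ℓ(k+1) = (1-β)X_ℓ(k) + β V(k) X_ℓ(k-τ) with each V(k) doubly stochastic with second largest singular value at most δ_C ∈ (0,1), initial condition X_ℓ(k) = X_ℓ(0) for k ∈ [-τ,0], and β ∈ (0, 1 - e^{-ln(1/δ_C)/τ}), setting η = 1 - β + δ_C β/(1-β)^τ, the leaders reach consensus exponentially: ‖X_ℓ(k) - 𝟙 x̄_ℓ(k)ᵀ‖ ≤ 2η^k ‖X_ℓ(0)‖ for all k ≥ 0, where x̄_ℓ(k) is the row average of X_ℓ(k) and η < 1. -/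
open Matrix

attribute [local instance] Matrix.frobeniusNormedAddCommGroup

/-- Deviation of a matrix from the all-ones-times-row-average matrix, `Y = X - 𝟙 x̄ᵀ`. -/
noncomputable def rowDev {r d : ℕ} (M : Matrix (Fin r) (Fin d) ℝ) : Matrix (Fin r) (Fin d) ℝ :=
  M - Matrix.of fun _ j => (r : ℝ)⁻¹ * ∑ a, M a j

/-!
The deviation `Y k = rowDev (X k)` obeys the same delayed recursion as `X k`, because `rowDev` is
multiplication by `1 - 𝟙𝟙ᵀ/r`, which commutes with every doubly stochastic `V`. Since `Y` has
zero column sums, `V` contracts it by `δ`, so `e k = ‖Y k‖` satisfies the scalar delayed inequality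
`e (k+1) ≤ (1-β) e k + βδ e (k-τ)`. A Halanay-type induction gives `e k ≤ C η^k` for any `η > 0`
with `(1-β) + βδ/η^τ ≤ η`; the paper's `η ≥ 1-β` is such a rate, and the bound on `β` says exactly
`δ < (1-β)^τ`, i.e. `η < 1`.
-/

attribute [local instance] Matrix.frobeniusNormSMulClass

noncomputable def averagingMatrix (r : ℕ) : Matrix (Fin r) (Fin r) ℝ :=
  (r : ℝ)⁻¹ • Matrix.of fun _ _ => 1

section averagingMatrix

variable {r : ℕ}

lemma norm_averagingMatrix_le_one : ‖averagingMatrix r‖ ≤ 1 := by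
  have hJ : ‖(Matrix.of fun _ _ => 1 : Matrix (Fin r) (Fin r) ℝ)‖ = r := by
    rw [frobenius_norm_def, ← Real.sqrt_eq_rpow]
    simp [Real.sqrt_mul_self]
  rw [averagingMatrix, norm_smul, hJ, norm_inv, Real.norm_natCast]
  exact inv_mul_le_one

lemma averagingMatrix_mul_of_mem_doublyStochastic {V : Matrix (Fin r) (Fin r) ℝ}
    (hV : V ∈ doublyStochastic ℝ (Fin r)) :
    averagingMatrix r * V = averagingMatrix r := by
  ext i j
  simp [averagingMatrix, Matrix.mul_apply, ← Finset.mul_sum, sum_col_of_mem_doublyStochastic hV]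

lemma mul_averagingMatrix_of_mem_doublyStochastic {V : Matrix (Fin r) (Fin r) ℝ}
    (hV : V ∈ doublyStochastic ℝ (Fin r)) :
    V * averagingMatrix r = averagingMatrix r := by
  ext i j
  simp [averagingMatrix, Matrix.mul_apply, ← Finset.sum_mul, sum_row_of_mem_doublyStochastic hV]

end averagingMatrix

section rowDev

variable {r d : ℕ}

lemma rowDev_eq_one_sub_averagingMatrix_mul (M : Matrix (Fin r) (Fin d) ℝ) :
    rowDev M = (1 - averagingMatrix r) * M := by
  ext i j
  simp [rowDev, averagingMatrix, Matrix.mul_apply, Finset.mul_sum, sub_mul,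
    Finset.sum_sub_distrib, Matrix.one_apply]

lemma rowDev_add (X Z : Matrix (Fin r) (Fin d) ℝ) : rowDev (X + Z) = rowDev X + rowDev Z := by
  simp only [rowDev_eq_one_sub_averagingMatrix_mul, Matrix.mul_add]

lemma rowDev_smul (c : ℝ) (X : Matrix (Fin r) (Fin d) ℝ) : rowDev (c • X) = c • rowDev X := by
  simp only [rowDev_eq_one_sub_averagingMatrix_mul, Matrix.mul_smul]

lemma rowDev_mul_of_mem_doublyStochastic {V : Matrix (Fin r) (Fin r) ℝ}
    (hV : V ∈ doublyStochastic ℝ (Fin r)) (X : Matrix (Fin r) (Fin d) ℝ) :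
    rowDev (V * X) = V * rowDev X := by
  simp only [rowDev_eq_one_sub_averagingMatrix_mul, ← Matrix.mul_assoc, Matrix.sub_mul,
    Matrix.mul_sub, Matrix.one_mul, averagingMatrix_mul_of_mem_doublyStochastic hV,
    mul_averagingMatrix_of_mem_doublyStochastic hV]

lemma sum_rowDev_apply (M : Matrix (Fin r) (Fin d) ℝ) (j : Fin d) : ∑ a, rowDev M a j = 0 := by
  rcases Nat.eq_zero_or_pos r with rfl | hr
  · simp
  · have hr' : (r : ℝ) ≠ 0 := Nat.cast_ne_zero.mpr hr.ne'
    simp [rowDev, Finset.sum_sub_distrib, mul_inv_cancel_left₀ hr']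

lemma norm_rowDev_le (M : Matrix (Fin r) (Fin d) ℝ) : ‖rowDev M‖ ≤ 2 * ‖M‖ := by
  calc ‖rowDev M‖ = ‖M - averagingMatrix r * M‖ := by
        rw [rowDev_eq_one_sub_averagingMatrix_mul, Matrix.sub_mul, Matrix.one_mul]
    _ ≤ ‖M‖ + ‖averagingMatrix r‖ * ‖M‖ :=
        (norm_sub_le _ _).trans (by gcongr; exact frobenius_norm_mul _ _)
    _ ≤ 2 * ‖M‖ := by nlinarith [norm_averagingMatrix_le_one (r := r), norm_nonneg M]

lemma norm_rowDev_smul_add_smul_mul_le {β δ : ℝ} (hβ0 : 0 ≤ β) (hβ1 : β ≤ 1)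
    {V : Matrix (Fin r) (Fin r) ℝ} (hV : V ∈ doublyStochastic ℝ (Fin r))
    (hVδ : ∀ Y : Matrix (Fin r) (Fin d) ℝ, (∀ j, ∑ a, Y a j = 0) → ‖V * Y‖ ≤ δ * ‖Y‖)
    (X Z : Matrix (Fin r) (Fin d) ℝ) :
    ‖rowDev ((1 - β) • X + β • (V * Z))‖ ≤ (1 - β) * ‖rowDev X‖ + β * δ * ‖rowDev Z‖ := by
  rw [rowDev_add, rowDev_smul, rowDev_smul, rowDev_mul_of_mem_doublyStochastic hV]
  calc _ ≤ ‖(1 - β) • rowDev X‖ + ‖β • (V * rowDev Z)‖ := norm_add_le _ _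
    _ = (1 - β) * ‖rowDev X‖ + β * ‖V * rowDev Z‖ := by
        rw [norm_smul, norm_smul, Real.norm_of_nonneg (by linarith), Real.norm_of_nonneg hβ0]
    _ ≤ (1 - β) * ‖rowDev X‖ + β * (δ * ‖rowDev Z‖) := by
        gcongr; exact hVδ _ (sum_rowDev_apply Z)
    _ = _ := by ring

end rowDev

lemma le_mul_zpow_of_delayed_le {e : ℤ → ℝ} {a b η C : ℝ} {τ : ℕ} (ha : 0 ≤ a) (hb : 0 ≤ b)
    (hη : 0 < η) (hC : 0 ≤ C) (hrate : a + b / η ^ τ ≤ η)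
    (hinit : ∀ k : ℤ, -(τ : ℤ) ≤ k → k ≤ 0 → e k ≤ C * η ^ k)
    (hstep : ∀ k : ℤ, 0 ≤ k → e (k + 1) ≤ a * e k + b * e (k - τ)) :
    ∀ k : ℤ, -(τ : ℤ) ≤ k → e k ≤ C * η ^ k := by
  suffices h : ∀ n : ℕ, ∀ k : ℤ, -(τ : ℤ) ≤ k → k ≤ n → e k ≤ C * η ^ k from
    fun k hk => h k.toNat k hk (Int.self_le_toNat k)
  intro n
  induction n with
  | zero => simpa using hinit
  | succ n ih =>
    intro k hk hkn
    rcases lt_or_eq_of_le hkn with hlt | rfl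
    · exact ih k hk (by omega)
    · have hn := ih n (by omega) le_rfl
      have hnτ := ih (n - τ) (by omega) (by omega)
      calc e ((n + 1 : ℕ) : ℤ) = e (n + 1) := by push_cast; rfl
        _ ≤ a * e n + b * e (n - τ) := hstep n (by positivity)
        _ ≤ a * (C * η ^ (n : ℤ)) + b * (C * η ^ ((n : ℤ) - τ)) := by gcongr
        _ = C * η ^ (n : ℤ) * (a + b / η ^ τ) := by
            rw [zpow_sub₀ hη.ne']; simp only [zpow_natCast]; ring
        _ ≤ C * η ^ (n : ℤ) * η := by gcongr
        _ = C * η ^ ((n + 1 : ℕ) : ℤ) := by push_cast; rw [zpow_add_one₀ hη.ne', mul_assoc]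

lemma lt_one_sub_pow_of_lt_one_sub_exp {β δ : ℝ} {τ : ℕ} (hδ0 : 0 < δ) (hδ1 : δ < 1)
    (hβ : β < 1 - Real.exp (-Real.log (1 / δ) / τ)) : δ < (1 - β) ^ τ := by
  rcases Nat.eq_zero_or_pos τ with rfl | hτ
  · simpa using hδ1
  · calc δ = Real.exp (-Real.log (1 / δ) / τ) ^ τ := by
          rw [← Real.exp_nat_mul, mul_div_cancel₀ _ (by positivity), one_div, Real.log_inv,
            neg_neg, Real.exp_log hδ0]
      _ < (1 - β) ^ τ := pow_lt_pow_left₀ (by linarith) (Real.exp_pos _).le hτ.ne'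

lemma one_sub_add_div_pow_lt_one {β δ : ℝ} {τ : ℕ} (hβ0 : 0 < β) (hβ1 : β < 1)
    (hδ : δ < (1 - β) ^ τ) : 1 - β + δ * β / (1 - β) ^ τ < 1 := by
  have : δ * β / (1 - β) ^ τ < β := by
    rw [div_lt_iff₀ (pow_pos (sub_pos.2 hβ1) τ)]
    nlinarith
  linarith

theorem stmt_7_general (r d : ℕ) (β δC : ℝ) (τ : ℕ)
    (hδC : δC ∈ Set.Ioo (0 : ℝ) 1)
    (hβ0 : 0 < β) (hβ1 : β < 1 - Real.exp (-Real.log (1 / δC) / τ))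
    (V : ℤ → Matrix (Fin r) (Fin r) ℝ) (hV : ∀ k, V k ∈ doublyStochastic ℝ (Fin r))
    (hVδ : ∀ k, ∀ Y : Matrix (Fin r) (Fin d) ℝ, (∀ j, (∑ a, Y a j) = 0) → ‖V k * Y‖ ≤ δC * ‖Y‖)
    (Xl : ℤ → Matrix (Fin r) (Fin d) ℝ)
    (hinit : ∀ k : ℤ, -(τ : ℤ) ≤ k → k ≤ 0 → Xl k = Xl 0)
    (hdyn : ∀ k : ℤ, 0 ≤ k → Xl (k + 1) = (1 - β) • Xl k + β • (V k * Xl (k - τ))) :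
    1 - β + δC * β / (1 - β) ^ τ < 1 ∧
    ∀ k : ℤ, 0 ≤ k →
      ‖rowDev (Xl k)‖ ≤ 2 * (1 - β + δC * β / (1 - β) ^ τ) ^ k.toNat * ‖Xl 0‖ := by
  obtain ⟨hδ0, hδ1⟩ := hδC
  have hβ1' : β < 1 := hβ1.trans (sub_lt_self 1 (Real.exp_pos _))
  have hpow : 0 < (1 - β) ^ τ := pow_pos (sub_pos.2 hβ1') τ
  set η := 1 - β + δC * β / (1 - β) ^ τ
  have hη_ge : 1 - β ≤ η := le_add_of_nonneg_right (by positivity)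
  have hη_pos : 0 < η := by linarith
  have hη_lt := one_sub_add_div_pow_lt_one hβ0 hβ1' (lt_one_sub_pow_of_lt_one_sub_exp hδ0 hδ1 hβ1)
  refine ⟨hη_lt, fun k hk => ?_⟩
  have hrate : 1 - β + β * δC / η ^ τ ≤ η := by
    calc 1 - β + β * δC / η ^ τ ≤ 1 - β + β * δC / (1 - β) ^ τ := by gcongr
      _ = η := by ring
  have hdecay := le_mul_zpow_of_delayed_le (e := fun k => ‖rowDev (Xl k)‖) (C := 2 * ‖Xl 0‖)
    (sub_nonneg.2 hβ1'.le) (by positivity) hη_pos (by positivity) hrate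
    (fun k hk₀ hk₁ => by
      simpa [hinit k hk₀ hk₁] using
        (norm_rowDev_le (Xl 0)).trans (le_mul_of_one_le_right (by positivity)
          (one_le_zpow_of_nonpos₀ hη_pos hη_lt.le hk₁)))
    (fun k hk => by
      simpa only [hdyn k hk, mul_assoc] using
        norm_rowDev_smul_add_smul_mul_le hβ0.le hβ1'.le (hV k) (hVδ k) (Xl k) (Xl (k - τ)))
    k (by omega)
  calc ‖rowDev (Xl k)‖ ≤ 2 * ‖Xl 0‖ * η ^ k := hdecay
    _ = 2 * η ^ k.toNat * ‖Xl 0‖ := by rw [← zpow_natCast, Int.toNat_of_nonneg hk]; ring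

/-- Lemma 2 of the paper: under the delayed leader dynamics with
`β ∈ (0, 1 - e^{-ln(1/δ_C)/τ})`, the leaders reach consensus exponentially:
`‖X_ℓ(k) - 𝟙 x̄_ℓ(k)ᵀ‖ ≤ 2 η^k ‖X_ℓ(0)‖` with `η = 1 - β + δ_C β/(1-β)^τ < 1`. -/
theorem stmt_7 (r d : ℕ) (hr : 0 < r) (β δC : ℝ) (τ : ℕ)
    (hδC : δC ∈ Set.Ioo (0 : ℝ) 1)
    (hβ0 : 0 < β) (hβ1 : β < 1 - Real.exp (-Real.log (1 / δC) / τ))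
    (V : ℤ → Matrix (Fin r) (Fin r) ℝ) (hV : ∀ k, V k ∈ doublyStochastic ℝ (Fin r))
    (hVδ : ∀ k, ∀ Y : Matrix (Fin r) (Fin d) ℝ, (∀ j, (∑ a, Y a j) = 0) → ‖V k * Y‖ ≤ δC * ‖Y‖)
    (Xl : ℤ → Matrix (Fin r) (Fin d) ℝ)
    (hinit : ∀ k : ℤ, -(τ : ℤ) ≤ k → k ≤ 0 → Xl k = Xl 0)
    (hdyn : ∀ k : ℤ, 0 ≤ k → Xl (k + 1) = (1 - β) • Xl k + β • (V k * Xl (k - τ))) :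
    1 - β + δC * β / (1 - β) ^ τ < 1 ∧
    ∀ k : ℤ, 0 ≤ k →
      ‖rowDev (Xl k)‖ ≤ 2 * (1 - β + δC * β / (1 - β) ^ τ) ^ k.toNat * ‖Xl 0‖ :=
  stmt_7_general r d β δC τ hδC hβ0 hβ1 V hV hVδ Xl hinit hdyn
end

section
/- In the two-time-scale consensus method with follower average x̄^a(k+1) = (1-γ)x̄^a(k) + γ x_ℓ^a(k) and leader update x_ℓ^a(k+1) = (1-β)x_ℓ^a(k) + β ∑_{b} v_{ab}(k) x_ℓ^b(k-τ), where all iterates are bounded in norm by P and the weights v_{ab}(k) ≥ 0 sum to 1 over b, the tracking error satisfies ‖x̄^a(k) - x_ℓ^a(k)‖ ≤ (1-γ)^k ‖x̄^a(0) - x_ℓ^a(0)‖ + 2Pβ/γ for all k ≥ 0. -/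
/-- Lemma 3 of the paper: the tracking error between the follower
average and its leader satisfies
`‖x̄(k) - x_ℓ(k)‖ ≤ (1-γ)^k ‖x̄(0) - x_ℓ(0)‖ + 2Pβ/γ`. -/
theorem stmt_10 (r d : ℕ) (γ β P : ℝ) (τ : ℕ)
    (hγ : γ ∈ Set.Ioo (0 : ℝ) 1) (hβ : β ∈ Set.Ioo (0 : ℝ) 1) (hP : 0 ≤ P) (a : Fin r)
    (xbar : ℤ → EuclideanSpace ℝ (Fin d)) (xl : ℤ → Fin r → EuclideanSpace ℝ (Fin d))
    (v : ℤ → Matrix (Fin r) (Fin r) ℝ)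
    (hv : ∀ k b c, 0 ≤ v k b c) (hvsum : ∀ k b, ∑ c, v k b c = 1)
    (hbx : ∀ k, ‖xbar k‖ ≤ P) (hbl : ∀ k b, ‖xl k b‖ ≤ P)
    (hfol : ∀ k : ℤ, 0 ≤ k → xbar (k + 1) = (1 - γ) • xbar k + γ • xl k a)
    (hlead : ∀ k : ℤ, 0 ≤ k →
      xl (k + 1) a = (1 - β) • xl k a + β • ∑ b, v k a b • xl (k - τ) b) :
    ∀ k : ℤ, 0 ≤ k →
      ‖xbar k - xl k a‖ ≤ (1 - γ) ^ k.toNat * ‖xbar 0 - xl 0 a‖ + 2 * P * β / γ := by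
  obtain ⟨hγ0, hγ1⟩ := hγ
  obtain ⟨hβ0, hβ1⟩ := hβ
  intro k hk
  obtain ⟨n, rfl⟩ := Int.eq_ofNat_of_zero_le hk
  induction n with
  | zero =>
      simp
      positivity
  | succ n ih =>
      have ih := ih (by positivity)
      set k : ℤ := (n : ℤ) with hkdef
      have hk : (0:ℤ) ≤ k := by positivity
      have hcast : ((n+1 : ℕ) : ℤ) = k + 1 := by push_cast; ring
      rw [hcast]
      -- key identity
      have hid : xbar (k + 1) - xl (k + 1) a
          = (1 - γ) • (xbar k - xl k a)
            + β • (xl k a - ∑ b, v k a b • xl (k - τ) b) := by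
        rw [hfol k hk, hlead k hk]
        module
      have hsumnorm : ‖∑ b, v k a b • xl (k - τ) b‖ ≤ P := by
        calc ‖∑ b, v k a b • xl (k - τ) b‖ ≤ ∑ b, ‖v k a b • xl (k - τ) b‖ :=
              norm_sum_le _ _
          _ ≤ ∑ b, v k a b * P := by
              apply Finset.sum_le_sum
              intro b _
              rw [norm_smul, Real.norm_eq_abs, abs_of_nonneg (hv k a b)]
              exact mul_le_mul_of_nonneg_left (hbl _ _) (hv k a b)
          _ = P := by rw [← Finset.sum_mul, hvsum k a, one_mul]
      have hnoise : ‖β • (xl k a - ∑ b, v k a b • xl (k - τ) b)‖ ≤ 2 * P * β := by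
        rw [norm_smul, Real.norm_eq_abs, abs_of_pos hβ0]
        have : ‖xl k a - ∑ b, v k a b • xl (k - τ) b‖ ≤ 2 * P := by
          calc ‖xl k a - ∑ b, v k a b • xl (k - τ) b‖
              ≤ ‖xl k a‖ + ‖∑ b, v k a b • xl (k - τ) b‖ := norm_sub_le _ _
            _ ≤ P + P := add_le_add (hbl _ _) hsumnorm
            _ = 2 * P := by ring
        nlinarith
      have hstep : ‖xbar (k + 1) - xl (k + 1) a‖
          ≤ (1 - γ) * ‖xbar k - xl k a‖ + 2 * P * β := by
        rw [hid]
        calc _ ≤ ‖(1 - γ) • (xbar k - xl k a)‖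
              + ‖β • (xl k a - ∑ b, v k a b • xl (k - τ) b)‖ := norm_add_le _ _
          _ ≤ (1 - γ) * ‖xbar k - xl k a‖ + 2 * P * β := by
              rw [norm_smul, Real.norm_eq_abs, abs_of_pos (by linarith)]
              exact add_le_add le_rfl hnoise
      have htn : (k + 1).toNat = k.toNat + 1 := by omega
      rw [htn, pow_succ]
      have h1γ : (0:ℝ) ≤ 1 - γ := by linarith
      have key : (1 - γ) * ((1 - γ) ^ k.toNat * ‖xbar 0 - xl 0 a‖ + 2 * P * β / γ)
          + 2 * P * β = (1 - γ) ^ k.toNat * (1 - γ) * ‖xbar 0 - xl 0 a‖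
            + 2 * P * β / γ := by
        field_simp
        ring
      calc ‖xbar (k + 1) - xl (k + 1) a‖
          ≤ (1 - γ) * ‖xbar k - xl k a‖ + 2 * P * β := hstep
        _ ≤ (1 - γ) * ((1 - γ) ^ k.toNat * ‖xbar 0 - xl 0 a‖ + 2 * P * β / γ)
            + 2 * P * β := by nlinarith [mul_le_mul_of_nonneg_left ih h1γ]
        _ = _ := key
end

section
/- Suppose X(k+1) = (1-γ)W X(k) + γ 𝟙 x_ℓ(k)ᵀ with W doubly stochastic having second largest singular value σ ∈ (0,1), γ ∈ (0,1), and suppose the sequence x_ℓ(k) converges to a limit x* ∈ ℝ^d. Then every row x_i(k) of X(k) converges to x* as k → ∞. -/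
/-!
Let `J = (1/n) 𝟙𝟙ᵀ`, so that every row of `J X` is the average row of `X`. Since `W` is doubly
stochastic, `J W = W J = J`, and `J` fixes matrices with equal rows. Hence the deviation
`X - J X` obeys `Y(k+1) = (1-γ) W Y(k)`; its columns sum to zero, so its norm contracts by the
factor `(1-γ)σ < 1`. The averaged part obeys `J X(k+1) = (1-γ) J X(k) + γ 𝟙 x_ℓ(k)ᵀ`, a stable
affine recursion driven by an input converging to `𝟙 x*ᵀ`, so it converges to `𝟙 x*ᵀ`.
-/

open Matrix Filter

attribute [local instance] Matrix.frobeniusNormedAddCommGroup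
attribute [local instance] Matrix.frobeniusNormedSpace

theorem tendsto_zero_of_le_mul_add {c : ℝ} {e v : ℕ → ℝ} (hc0 : 0 ≤ c) (hc1 : c < 1)
    (he : ∀ k, 0 ≤ e k) (hrec : ∀ k, e (k + 1) ≤ c * e k + v k)
    (hv : Tendsto v atTop (nhds 0)) : Tendsto e atTop (nhds 0) := by
  refine tendsto_order.2 ⟨fun a ha => .of_forall fun k => ha.trans_le (he k), fun ε hε => ?_⟩
  obtain ⟨N, hN⟩ := eventually_atTop.1 <|
    hv.eventually (ge_mem_nhds (by positivity : (0 : ℝ) < (1 - c) * (ε / 2)))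
  -- once `v k ≤ (1 - c) * (ε / 2)`, the excess of `e` over `ε / 2` contracts by the factor `c`
  have hcontr : ∀ m, e (m + N) - ε / 2 ≤ c ^ m * (e N - ε / 2) := by
    intro m
    induction m with
    | zero => simp
    | succ m ih =>
      calc e (m + 1 + N) - ε / 2 ≤ c * (e (m + N) - ε / 2) := by
            rw [Nat.add_right_comm]
            linarith [hrec (m + N), hN (m + N) (Nat.le_add_left N m)]
        _ ≤ c ^ (m + 1) * (e N - ε / 2) := by
            rw [pow_succ', mul_assoc]
            exact mul_le_mul_of_nonneg_left ih hc0
  have hgeo : Tendsto (fun m => c ^ m * (e N - ε / 2) + ε / 2) atTop (nhds (ε / 2)) := by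
    simpa using ((tendsto_pow_atTop_nhds_zero_of_lt_one hc0 hc1).mul_const _).add_const (ε / 2)
  have hshift : ∀ᶠ m in atTop, e (m + N) < ε :=
    (hgeo.eventually (gt_mem_nhds (half_lt_self hε))).mono fun m hm => by linarith [hcontr m]
  exact tendsto_principal.1 <| (tendsto_add_atTop_iff_nat (l := 𝓟 (Set.Iio ε)) N).1 <|
    tendsto_principal.2 hshift

theorem tendsto_of_eq_smul_add_one_sub_smul {E : Type*} [SeminormedAddCommGroup E]
    [NormedSpace ℝ E] {c : ℝ} {b u : ℕ → E} {L : E} (hc0 : 0 ≤ c) (hc1 : c < 1)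
    (hrec : ∀ k, b (k + 1) = c • b k + (1 - c) • u k) (hu : Tendsto u atTop (nhds L)) :
    Tendsto b atTop (nhds L) := by
  rw [tendsto_iff_norm_sub_tendsto_zero] at hu ⊢
  refine tendsto_zero_of_le_mul_add hc0 hc1 (fun k => norm_nonneg _) (fun k => ?_)
    (by simpa using hu.const_mul (1 - c))
  calc ‖b (k + 1) - L‖ = ‖c • (b k - L) + (1 - c) • (u k - L)‖ := by rw [hrec]; congr 1; module
    _ ≤ c * ‖b k - L‖ + (1 - c) * ‖u k - L‖ := by
      refine (norm_add_le _ _).trans_eq ?_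
      rw [norm_smul_of_nonneg hc0, norm_smul_of_nonneg (sub_nonneg.2 hc1.le)]

theorem tendsto_zero_of_norm_le_mul {E : Type*} [SeminormedAddCommGroup E] {c : ℝ} {y : ℕ → E}
    (hc0 : 0 ≤ c) (hc1 : c < 1) (hrec : ∀ k, ‖y (k + 1)‖ ≤ c * ‖y k‖) :
    Tendsto y atTop (nhds 0) :=
  tendsto_zero_iff_norm_tendsto_zero.2 <| tendsto_zero_of_le_mul_add hc0 hc1
    (fun k => norm_nonneg _) (fun k => by simpa using hrec k) tendsto_const_nhds

namespace Matrix

variable {m n R : Type*} [Fintype m] [Field R]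

def avgMatrix (m : Type*) [Fintype m] (R : Type*) [Field R] : Matrix m m R :=
  of fun _ _ => (Fintype.card m : R)⁻¹

theorem mul_avgMatrix {W : Matrix m m R} (hW : ∀ i, ∑ j, W i j = 1) :
    W * avgMatrix m R = avgMatrix m R := by
  ext i j
  simp [avgMatrix, mul_apply, ← Finset.sum_mul, hW]

theorem avgMatrix_mul {W : Matrix m m R} (hW : ∀ j, ∑ i, W i j = 1) :
    avgMatrix m R * W = avgMatrix m R := by
  ext i j
  simp [avgMatrix, mul_apply, ← Finset.mul_sum, hW]

variable [CharZero R] [Nonempty m]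

theorem avgMatrix_mul_replicateRow (v : n → R) :
    avgMatrix m R * replicateRow m v = replicateRow m v := by
  ext i j
  simp [avgMatrix, mul_apply]

theorem sum_sub_avgMatrix_mul_apply (X : Matrix m n R) (j : n) :
    ∑ i, (X - avgMatrix m R * X) i j = 0 := by
  simp [avgMatrix, mul_apply, ← Finset.mul_sum]

def followerStep (γ : R) (W : Matrix m m R) (v : n → R) (X : Matrix m n R) : Matrix m n R :=
  (1 - γ) • (W * X) + γ • replicateRow m v

variable {γ : R} {W : Matrix m m R}

theorem avgMatrix_mul_followerStep (hW : ∀ j, ∑ i, W i j = 1) (v : n → R) (X : Matrix m n R) :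
    avgMatrix m R * followerStep γ W v X =
      (1 - γ) • (avgMatrix m R * X) + γ • replicateRow m v := by
  rw [followerStep, Matrix.mul_add, Matrix.mul_smul, Matrix.mul_smul, ← Matrix.mul_assoc,
    avgMatrix_mul hW, avgMatrix_mul_replicateRow]

theorem followerStep_sub_avgMatrix_mul (hWr : ∀ i, ∑ j, W i j = 1) (hWc : ∀ j, ∑ i, W i j = 1)
    (v : n → R) (X : Matrix m n R) :
    followerStep γ W v X - avgMatrix m R * followerStep γ W v X =
      (1 - γ) • (W * (X - avgMatrix m R * X)) := by
  rw [avgMatrix_mul_followerStep hWc, followerStep, Matrix.mul_sub, ← Matrix.mul_assoc,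
    mul_avgMatrix hWr]
  module

end Matrix

/-- if the leader signal `x_ℓ(k)` converges to `x*`, then every
follower state (row of `X(k)`) converges to `x*`. -/
theorem stmt_16 (n d : ℕ) (hn : 0 < n) (γ σ : ℝ)
    (hγ : γ ∈ Set.Ioo (0 : ℝ) 1) (hσ : σ ∈ Set.Ioo (0 : ℝ) 1)
    (W : Matrix (Fin n) (Fin n) ℝ) (hW : W ∈ doublyStochastic ℝ (Fin n))
    (hσW : ∀ Y : Matrix (Fin n) (Fin d) ℝ, (∀ j, (∑ i, Y i j) = 0) → ‖W * Y‖ ≤ σ * ‖Y‖)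
    (X : ℕ → Matrix (Fin n) (Fin d) ℝ) (xl : ℕ → EuclideanSpace ℝ (Fin d))
    (xstar : EuclideanSpace ℝ (Fin d))
    (hdyn : ∀ k, X (k + 1) = (1 - γ) • (W * X k) + γ • Matrix.of (fun _ j => xl k j))
    (hconv : Tendsto xl atTop (nhds xstar)) :
    ∀ i : Fin n,
      Tendsto (fun k => (WithLp.toLp 2 (fun j => X k i j) : EuclideanSpace ℝ (Fin d))) atTop
        (nhds xstar) := by
  have : Nonempty (Fin n) := Fin.pos_iff_nonempty.1 hn
  obtain ⟨hγ0, hγ1⟩ := hγ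
  obtain ⟨hσ0, hσ1⟩ := hσ
  have hWr := sum_row_of_mem_doublyStochastic hW
  have hWc := sum_col_of_mem_doublyStochastic hW
  have hstep : ∀ k, X (k + 1) = followerStep γ W (xl k).ofLp (X k) := hdyn
  set J := avgMatrix (Fin n) ℝ
  have hdev : Tendsto (fun k => X k - J * X k) atTop (nhds 0) := by
    refine tendsto_zero_of_norm_le_mul (c := (1 - γ) * σ) (by positivity) (by nlinarith)
      fun k => ?_
    rw [hstep, followerStep_sub_avgMatrix_mul hWr hWc, norm_smul_of_nonneg (by linarith),
      mul_assoc]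
    exact mul_le_mul_of_nonneg_left (hσW _ (sum_sub_avgMatrix_mul_apply _)) (by linarith)
  have havg : Tendsto (fun k => J * X k) atTop (nhds (replicateRow (Fin n) xstar.ofLp)) := by
    refine tendsto_of_eq_smul_add_one_sub_smul (c := 1 - γ)
      (u := fun k => replicateRow (Fin n) (xl k).ofLp) (by linarith) (by linarith)
      (fun k => ?_) ?_
    · rw [hstep, avgMatrix_mul_followerStep hWc, sub_sub_cancel]
    · exact ((PiLp.continuous_ofLp 2 _).matrix_replicateRow.tendsto xstar).comp hconv
  have hX : Tendsto X atTop (nhds (replicateRow (Fin n) xstar.ofLp)) := by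
    simpa using hdev.add havg
  intro i
  exact (((PiLp.continuous_toLp 2 _).comp (continuous_apply i)).tendsto _).comp hX
end
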